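/- Fix δ ∈ (0,1), γ ≥ 5 and λ > e³/δ, and set C₂ = 3·max{γ + 1 + log λ, λe³}. Let (r₁, a₁, d₁) and (r₂, a₂, d₂) be admissible triples with d₂ ≤ d₁, and suppose the open intervals U_{r₁}(a₁) and U_{r₂}(a₂) intersect. Then U_{r₂}(a₂) ⊆ U_{r₁^{C₂}}(a₁), i.e. (log(a₂/r₂), log(a₂ r₂)) ⊆ (log a₁ − C₂ log r₁, log a₁ + C₂ log r₁). -/

import Mathlib

/-!
Write `Lᵢ = log rᵢ`. The interval `U_{rᵢ}(aᵢ)` is `(log aᵢ - Lᵢ, log aᵢ + Lᵢ)`, so if the two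
intervals meet then `U_{r₂}(a₂)` lies within `L₁ + 2 L₂` of `log a₁`, and it suffices to show
`L₂ ≤ C L₁` with `C = max {γ + 1 + log λ, λ e³} ≥ 1`. Meeting also gives `a₁ ≤ a₂ r₁ r₂`;
chaining this with the lower bound for `d₂`, `d₂ ≤ d₁` and the upper bound for `d₁` cancels
`a₂` and bounds `r₂` (or `L₂`) in terms of `r₁` in each of the four large/small cases.
-/

/-- Admissibility of a triple `(r, a, d)` of positive reals with `r > 1`, relative to
parameters `γ, λ`: either (large case) `r > e` and `a r² ≤ d ≤ λ a r^γ`, or (small case)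
`1 < r ≤ e` and `a e² log r ≤ d ≤ λ a e² log r`. -/
def Admissible (γ lam r a d : ℝ) : Prop :=
  (Real.exp 1 < r ∧ a * r ^ (2 : ℕ) ≤ d ∧ d ≤ lam * a * r ^ γ) ∨
  (1 < r ∧ r ≤ Real.exp 1 ∧ a * Real.exp 2 * Real.log r ≤ d ∧
    d ≤ lam * a * Real.exp 2 * Real.log r)

open Real Set

section Intervals

variable {x₁ x₂ l₁ l₂ : ℝ}

theorem lt_add_add_of_inter_nonempty
    (h : (Ioo (x₁ - l₁) (x₁ + l₁) ∩ Ioo (x₂ - l₂) (x₂ + l₂)).Nonempty) :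
    x₁ < x₂ + l₁ + l₂ := by
  obtain ⟨x, ⟨h₁, -⟩, -, h₂⟩ := h
  linarith

theorem Ioo_subset_Ioo_of_inter_nonempty {C : ℝ}
    (h : (Ioo (x₁ - l₁) (x₁ + l₁) ∩ Ioo (x₂ - l₂) (x₂ + l₂)).Nonempty)
    (hC : l₁ + 2 * l₂ ≤ C) :
    Ioo (x₂ - l₂) (x₂ + l₂) ⊆ Ioo (x₁ - C) (x₁ + C) := by
  have h₁₂ := lt_add_add_of_inter_nonempty h
  have h₂₁ := lt_add_add_of_inter_nonempty (inter_comm _ _ ▸ h)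
  exact Ioo_subset_Ioo (by linarith) (by linarith)

end Intervals

theorem Ioo_log_div_log_mul {a r : ℝ} (ha : a ≠ 0) (hr : r ≠ 0) :
    Ioo (log (a / r)) (log (a * r)) = Ioo (log a - log r) (log a + log r) := by
  rw [log_div ha hr, log_mul ha hr]

section Cases

variable {γ lam r₁ r₂ : ℝ}

theorem log_le_of_sq_le_mul_rpow (hr₁ : exp 1 < r₁) (hr₂ : 0 < r₂) (hlam : 1 ≤ lam)
    (h : r₂ ^ 2 ≤ r₁ * r₂ * (lam * r₁ ^ γ)) :
    log r₂ ≤ (γ + 1 + log lam) * log r₁ := by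
  have hr₁₀ : 0 < r₁ := (exp_pos 1).trans hr₁
  have hL₁ : 1 < log r₁ := (lt_log_iff_exp_lt hr₁₀).2 hr₁
  have hloglam : 0 ≤ log lam := log_nonneg hlam
  have hr₂le : r₂ ≤ lam * r₁ * r₁ ^ γ :=
    le_of_mul_le_mul_left (by nlinarith) hr₂
  have hpow : 0 < r₁ ^ γ := rpow_pos_of_pos hr₁₀ γ
  calc log r₂ ≤ log (lam * r₁ * r₁ ^ γ) := log_le_log hr₂ hr₂le
    _ = log lam + (γ + 1) * log r₁ := by
      rw [log_mul (by positivity) hpow.ne', log_mul (by positivity) hr₁₀.ne',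
        log_rpow hr₁₀]
      ring
    _ ≤ (γ + 1 + log lam) * log r₁ := by nlinarith

theorem log_le_of_sq_le_mul_log (hr₁ : r₁ ≤ exp 1) (hr₁₀ : 0 < r₁) (hr₂ : 0 < r₂)
    (h : r₂ ^ 2 ≤ r₁ * r₂ * (lam * exp 2 * log r₁)) :
    log r₂ ≤ lam * exp 3 * log r₁ := by
  have hr₂le : r₂ ≤ r₁ * (lam * exp 2 * log r₁) :=
    le_of_mul_le_mul_left (by nlinarith) hr₂
  have hpos : 0 < lam * exp 2 * log r₁ := pos_of_mul_pos_right (hr₂.trans_le hr₂le) hr₁₀.le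
  calc log r₂ ≤ r₂ := (log_le_sub_one_of_pos hr₂).trans (by linarith)
    _ ≤ exp 1 * (lam * exp 2 * log r₁) := hr₂le.trans (by gcongr)
    _ = lam * exp 3 * log r₁ := by
      rw [show (3 : ℝ) = 1 + 2 by norm_num, exp_add]
      ring

theorem log_le_of_log_le_mul_log (hr₁ : r₁ ≤ exp 1) (hr₂ : r₂ ≤ exp 1) (hr₂₀ : 0 < r₂)
    (hL₁ : 0 ≤ log r₁) (hlam : 0 ≤ lam)
    (h : exp 2 * log r₂ ≤ r₁ * r₂ * (lam * exp 2 * log r₁)) :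
    log r₂ ≤ lam * exp 3 * log r₁ := by
  have hr : r₁ * r₂ ≤ exp 3 := by
    calc r₁ * r₂ ≤ exp 1 * exp 1 := mul_le_mul hr₁ hr₂ hr₂₀.le (exp_pos 1).le
      _ ≤ exp 3 := by rw [← exp_add]; exact exp_le_exp.2 (by norm_num)
  have h' : log r₂ ≤ r₁ * r₂ * (lam * log r₁) :=
    le_of_mul_le_mul_left (h.trans_eq (by ring)) (exp_pos 2)
  calc log r₂ ≤ r₁ * r₂ * (lam * log r₁) := h'
    _ ≤ exp 3 * (lam * log r₁) := by gcongr
    _ = lam * exp 3 * log r₁ := by ring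

end Cases

theorem one_le_max_add_log_mul_exp {γ lam : ℝ} (hlam : 1 ≤ lam) :
    1 ≤ max (γ + 1 + log lam) (lam * exp 3) :=
  le_max_of_le_right (one_le_mul_of_one_le_of_one_le hlam (one_le_exp (by norm_num)))

namespace Admissible

variable {γ lam r₁ a₁ d₁ r₂ a₂ d₂ : ℝ}

theorem one_lt (h : Admissible γ lam r₁ a₁ d₁) : 1 < r₁ := by
  rcases h with ⟨h, -⟩ | ⟨h, -⟩
  · exact (one_lt_exp_iff.2 one_pos).trans h
  · exact h

theorem log_le_max_mul_log (h₁ : Admissible γ lam r₁ a₁ d₁)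
    (h₂ : Admissible γ lam r₂ a₂ d₂) (hd : d₂ ≤ d₁) (hlam : 1 ≤ lam) (ha₂ : 0 < a₂)
    (ha : a₁ ≤ a₂ * r₁ * r₂) :
    log r₂ ≤ max (γ + 1 + log lam) (lam * exp 3) * log r₁ := by
  have hr₁ := h₁.one_lt
  have hr₂ := h₂.one_lt
  have hL₁ : 0 ≤ log r₁ := log_nonneg hr₁.le
  have cancel {b c : ℝ} (hc : 0 ≤ c) (h : a₂ * b ≤ a₁ * c) : b ≤ r₁ * r₂ * c :=
    le_of_mul_le_mul_left (h.trans (by nlinarith)) ha₂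
  rcases h₂ with ⟨hr₂e, hlow₂, -⟩ | ⟨-, hr₂e, hlow₂, -⟩ <;>
    rcases h₁ with ⟨hr₁e, -, hup₁⟩ | ⟨-, hr₁e, -, hup₁⟩
  · have h := cancel (b := r₂ ^ 2) (c := lam * r₁ ^ γ)
      (mul_nonneg (by linarith) (rpow_nonneg (by linarith) γ)) (by linarith)
    exact (log_le_of_sq_le_mul_rpow hr₁e (by linarith) hlam h).trans
      (mul_le_mul_of_nonneg_right (le_max_left _ _) hL₁)
  · have h := cancel (b := r₂ ^ 2) (c := lam * exp 2 * log r₁) (by positivity) (by linarith)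
    exact (log_le_of_sq_le_mul_log hr₁e (by linarith) (by linarith) h).trans
      (mul_le_mul_of_nonneg_right (le_max_right _ _) hL₁)
  · exact (log_le_log (by linarith) (by linarith)).trans
      (le_mul_of_one_le_left hL₁ (one_le_max_add_log_mul_exp hlam))
  · have h := cancel (b := exp 2 * log r₂) (c := lam * exp 2 * log r₁) (by positivity)
      (by linarith)
    exact (log_le_of_log_le_mul_log hr₁e hr₂e (by linarith) hL₁ (by linarith) h).trans
      (mul_le_mul_of_nonneg_right (le_max_right _ _) hL₁)

end Admissible

theorem intersecting_admissible_intervals_general (δ γ lam : ℝ) (hδ₀ : 0 < δ) (hδ₁ : δ < 1)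
    (hlam : Real.exp 3 / δ < lam)
    (r₁ a₁ d₁ r₂ a₂ d₂ : ℝ) (ha₁ : 0 < a₁) (ha₂ : 0 < a₂)
    (h₁ : Admissible γ lam r₁ a₁ d₁) (h₂ : Admissible γ lam r₂ a₂ d₂)
    (hd : d₂ ≤ d₁)
    (hint : (Set.Ioo (Real.log (a₁ / r₁)) (Real.log (a₁ * r₁)) ∩
      Set.Ioo (Real.log (a₂ / r₂)) (Real.log (a₂ * r₂))).Nonempty) :
    Set.Ioo (Real.log (a₂ / r₂)) (Real.log (a₂ * r₂)) ⊆
      Set.Ioo (Real.log a₁ - 3 * max (γ + 1 + Real.log lam) (lam * Real.exp 3) * Real.log r₁)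
        (Real.log a₁ + 3 * max (γ + 1 + Real.log lam) (lam * Real.exp 3) * Real.log r₁) := by
  have hlam₁ : 1 ≤ lam := by
    have : exp 3 < exp 3 / δ := (lt_div_iff₀ hδ₀).2 (by nlinarith [exp_pos 3])
    linarith [one_lt_exp_iff.2 (by norm_num : (0 : ℝ) < 3)]
  have hr₁ : 0 < r₁ := zero_lt_one.trans h₁.one_lt
  have hr₂ : 0 < r₂ := zero_lt_one.trans h₂.one_lt
  rw [Ioo_log_div_log_mul ha₁.ne' hr₁.ne', Ioo_log_div_log_mul ha₂.ne' hr₂.ne'] at hint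
  rw [Ioo_log_div_log_mul ha₂.ne' hr₂.ne']
  have ha : a₁ ≤ a₂ * r₁ * r₂ := by
    rw [← log_le_log_iff ha₁ (by positivity), log_mul (by positivity) hr₂.ne',
      log_mul ha₂.ne' hr₁.ne']
    linarith [lt_add_add_of_inter_nonempty hint]
  have hL := h₁.log_le_max_mul_log h₂ hd hlam₁ ha₂ ha
  have hM := one_le_max_add_log_mul_exp (γ := γ) hlam₁
  apply Ioo_subset_Ioo_of_inter_nonempty hint
  nlinarith [log_pos h₁.one_lt]

/-- if `(r₁,a₁,d₁)` and `(r₂,a₂,d₂)` are admissible triples with `d₂ ≤ d₁`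
whose intervals `U_{r₁}(a₁)` and `U_{r₂}(a₂)` intersect, then
`U_{r₂}(a₂) ⊆ (log a₁ − C₂ log r₁, log a₁ + C₂ log r₁)`,
where `C₂ = 3 max{γ + 1 + log λ, λ e³}`. -/
theorem intersecting_admissible_intervals (δ γ lam : ℝ) (hδ₀ : 0 < δ) (hδ₁ : δ < 1)
    (hγ : 5 ≤ γ) (hlam : Real.exp 3 / δ < lam)
    (r₁ a₁ d₁ r₂ a₂ d₂ : ℝ) (ha₁ : 0 < a₁) (ha₂ : 0 < a₂) (hd₁ : 0 < d₁) (hd₂ : 0 < d₂)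
    (h₁ : Admissible γ lam r₁ a₁ d₁) (h₂ : Admissible γ lam r₂ a₂ d₂)
    (hd : d₂ ≤ d₁)
    (hint : (Set.Ioo (Real.log (a₁ / r₁)) (Real.log (a₁ * r₁)) ∩
      Set.Ioo (Real.log (a₂ / r₂)) (Real.log (a₂ * r₂))).Nonempty) :
    Set.Ioo (Real.log (a₂ / r₂)) (Real.log (a₂ * r₂)) ⊆
      Set.Ioo (Real.log a₁ - 3 * max (γ + 1 + Real.log lam) (lam * Real.exp 3) * Real.log r₁)
        (Real.log a₁ + 3 * max (γ + 1 + Real.log lam) (lam * Real.exp 3) * Real.log r₁) :=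
  intersecting_admissible_intervals_general δ γ lam hδ₀ hδ₁ hlam r₁ a₁ d₁ r₂ a₂ d₂ ha₁ ha₂ h₁ h₂ hd
    hint
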